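/- Let D be a dyadic grid on ℝⁿ and 0 < α < 2n. For dyadic cubes Q₁, Q₂ with Q₁ ⊊ Q₂ and cancellative Haar function h_{Q₂}^{ε₂}, one has I_α^D(1_{Q₁}, h_{Q₂}^{ε₂}) = (1 + c_α)|Q₁|^{α/n} h_{Q₂}^{ε₂} 1_{Q₁} + |Q₁| Σ_{Q : Q₁ ⊊ Q ⊊ Q₂} |Q|^{α/n} h_{Q₂}^{ε₂} 1_Q / |Q|, where c_α is the constant with Σ_{Q ⊊ Q₁} |Q|^{α/n} 1_Q = c_α |Q₁|^{α/n} 1_{Q₁}. -/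

import Mathlib

open MeasureTheory Set
open scoped ENNReal Classical

noncomputable section

/-- A dyadic cube in `ℝⁿ`, encoded by its generation `k` and corner `m`:
the cube `∏ i, [2^k m i, 2^k (m i + 1))`. -/
abbrev Cube (n : ℕ) := ℤ × (Fin n → ℤ)

/-- The set in `ℝⁿ` corresponding to a dyadic cube. -/
def cubeSet {n : ℕ} (Q : Cube n) : Set (Fin n → ℝ) :=
  {x | ∀ i, (2:ℝ)^Q.1 * Q.2 i ≤ x i ∧ x i < (2:ℝ)^Q.1 * (Q.2 i + 1)}

/-- The volume `|Q| = 2^{kn}` of a dyadic cube. -/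
def vol {n : ℕ} (Q : Cube n) : ℝ := ((2:ℝ)^Q.1)^n

/-- The non-cancellative signature `ε = (1,…,1)`. -/
def allOne (n : ℕ) : Fin n → Bool := fun _ => true

/-- One-dimensional Haar functions on the dyadic interval `I = [2^k m, 2^k(m+1))`:
`h_I^0 = |I|^{-1/2} (1_{I₋} - 1_{I₊})` (for `e = false`) and `h_I^1 = |I|^{-1/2} 1_I`
(for `e = true`). -/
def haar1 (k m : ℤ) (e : Bool) (x : ℝ) : ℝ :=
  ((2:ℝ)^k) ^ (-(1/2) : ℝ) *
    (if e then Set.indicator (Set.Ico ((2:ℝ)^k * m) ((2:ℝ)^k * (m+1))) (fun _ => (1:ℝ)) x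
     else Set.indicator (Set.Ico ((2:ℝ)^k * m) ((2:ℝ)^k * ((m : ℝ) + 1/2))) (fun _ => (1:ℝ)) x
        - Set.indicator (Set.Ico ((2:ℝ)^k * ((m : ℝ) + 1/2)) ((2:ℝ)^k * (m+1))) (fun _ => (1:ℝ)) x)

/-- The Haar function `h_Q^ε = h_{I₁}^{ε₁} ⊗ ⋯ ⊗ h_{I_n}^{ε_n}` on a dyadic cube. -/
def haar {n : ℕ} (Q : Cube n) (ε : Fin n → Bool) (x : Fin n → ℝ) : ℝ :=
  ∏ i, haar1 Q.1 (Q.2 i) (ε i) (x i)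

/-- The average `⟨f⟩_Q = |Q|⁻¹ ∫_Q f`. -/
def avg {n : ℕ} (f : (Fin n → ℝ) → ℝ) (Q : Cube n) : ℝ :=
  (∫ x in cubeSet Q, f x) / vol Q

/-- The Haar coefficient `⟨f, h_Q^ε⟩`. -/
def haarCoef {n : ℕ} (f : (Fin n → ℝ) → ℝ) (Q : Cube n) (ε : Fin n → Bool) : ℝ :=
  ∫ x, f x * haar Q ε x

/-- The dyadic fractional integral `I_α^D f = Σ_Q |Q|^{α/n} ⟨f⟩_Q 1_Q`. -/
def Ialpha {n : ℕ} (α : ℝ) (f : (Fin n → ℝ) → ℝ) (x : Fin n → ℝ) : ℝ :=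
  ∑' Q : Cube n, vol Q ^ (α / n) * avg f Q * (cubeSet Q).indicator (fun _ => (1:ℝ)) x

/-- The bilinear dyadic fractional integral
`I_α^D(f₁,f₂) = Σ_Q |Q|^{α/n} ⟨f₁⟩_Q ⟨f₂⟩_Q 1_Q`. -/
def IalphaBil {n : ℕ} (α : ℝ) (f₁ f₂ : (Fin n → ℝ) → ℝ) (x : Fin n → ℝ) : ℝ :=
  ∑' Q : Cube n, vol Q ^ (α / n) * avg f₁ Q * avg f₂ Q * (cubeSet Q).indicator (fun _ => (1:ℝ)) x

/-- The constant `c_α = Σ_{j=1}^∞ 2^{-jα}`. -/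
def calpha (α : ℝ) : ℝ := ∑' j : ℕ, (2:ℝ) ^ (-((j:ℝ)+1) * α)

/-- The `k`-th dyadic ancestor `Q^{(k)}` of a dyadic cube. -/
def ancestor {n : ℕ} (k : ℕ) (Q : Cube n) : Cube n :=
  (Q.1 + k, fun i => Int.fdiv (Q.2 i) (2^k))

/-- The center of a dyadic cube (a convenient interior point of `Q`). -/
def center {n : ℕ} (Q : Cube n) : Fin n → ℝ := fun i => (2:ℝ)^Q.1 * ((Q.2 i : ℝ) + 1/2)

/-- An axis-parallel cube (box) of sidelength `l` with corner `a`. -/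
def box {n : ℕ} (a : Fin n → ℝ) (l : ℝ) : Set (Fin n → ℝ) :=
  {x | ∀ i, a i ≤ x i ∧ x i < a i + l}

end

/-!
Split the sum defining `I_α^D(1_{Q₁}, h_{Q₂}^ε)` according to the position of `Q`. Dyadic cubes
are nested or disjoint, so `⟨1_{Q₁}⟩_Q` vanishes unless `Q ⊆ Q₁` (average `1`) or `Q₁ ⊊ Q`
(average `|Q₁|/|Q|`). A cancellative Haar function has mean zero, so `⟨h_{Q₂}^ε⟩_Q = 0` once
`Q ⊇ Q₂`, and it is constant on every dyadic cube strictly inside `Q₂`, so there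
`⟨h_{Q₂}^ε⟩_Q 1_Q = h_{Q₂}^ε 1_Q`. The cubes `Q ⊆ Q₁` containing `x` are those of generation
`k₁ - j`, `j ≥ 0`, and contribute the geometric series `Σ_j 2^{(k₁-j)α} = (1 + c_α)|Q₁|^{α/n}`;
the cubes strictly between `Q₁` and `Q₂` are finitely many.
-/

lemma mem_Ico_two_zpow_mul_iff {j a b : ℤ} {t : ℝ} :
    t ∈ Ico ((2:ℝ) ^ j * a) (2 ^ j * b) ↔ a ≤ ⌊t / 2 ^ j⌋ ∧ ⌊t / 2 ^ j⌋ < b := by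
  have hj : (0:ℝ) < 2 ^ j := zpow_pos two_pos j
  rw [mem_Ico, Int.le_floor, Int.floor_lt, le_div_iff₀ hj, div_lt_iff₀ hj, mul_comm _ (a : ℝ),
    mul_comm _ (b : ℝ)]

lemma floor_div_two_zpow_of_le {j k : ℤ} (h : j ≤ k) (t : ℝ) :
    ⌊t / 2 ^ k⌋ = ⌊t / 2 ^ j⌋ / 2 ^ (k - j).toNat := by
  have hk : (2:ℝ) ^ k = 2 ^ j * ((2 ^ (k - j).toNat : ℕ) : ℝ) := by
    rw [Nat.cast_pow, Nat.cast_ofNat, ← zpow_natCast, Int.toNat_of_nonneg (by omega),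
      ← zpow_add₀ two_ne_zero, add_sub_cancel]
  rw [hk, ← div_div, Int.floor_div_natCast, Nat.cast_pow, Nat.cast_ofNat]

section Geometry

variable {n : ℕ}

lemma mem_cubeSet_iff_floor {Q : Cube n} {x : Fin n → ℝ} :
    x ∈ cubeSet Q ↔ ∀ i, ⌊x i / 2 ^ Q.1⌋ = Q.2 i := by
  refine forall_congr' fun i => ?_
  have h := mem_Ico_two_zpow_mul_iff (j := Q.1) (a := Q.2 i) (b := Q.2 i + 1) (t := x i)
  push_cast at h
  rw [← mem_Ico, h]
  omega

noncomputable def dyadicCube (k : ℤ) (x : Fin n → ℝ) : Cube n := (k, fun i => ⌊x i / 2 ^ k⌋)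

lemma mem_dyadicCube (k : ℤ) (x : Fin n → ℝ) : x ∈ cubeSet (dyadicCube k x) :=
  mem_cubeSet_iff_floor.2 fun _ => rfl

lemma dyadicCube_eq_of_mem {Q : Cube n} {x : Fin n → ℝ} (hx : x ∈ cubeSet Q) :
    dyadicCube Q.1 x = Q :=
  Prod.ext rfl (funext (mem_cubeSet_iff_floor.1 hx))

lemma dyadicCube_eq_of_le {Q : Cube n} {x y : Fin n → ℝ} {k : ℤ} (hx : x ∈ cubeSet Q)
    (hy : y ∈ cubeSet Q) (hk : Q.1 ≤ k) : dyadicCube k y = dyadicCube k x := by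
  refine Prod.ext rfl (funext fun i => ?_)
  simp only [dyadicCube, floor_div_two_zpow_of_le hk, mem_cubeSet_iff_floor.1 hx,
    mem_cubeSet_iff_floor.1 hy]

lemma cubeSet_subset_of_le {Q Q' : Cube n} {x : Fin n → ℝ} (hx : x ∈ cubeSet Q)
    (hx' : x ∈ cubeSet Q') (h : Q.1 ≤ Q'.1) : cubeSet Q ⊆ cubeSet Q' := by
  intro y hy
  rw [← dyadicCube_eq_of_mem hx', ← dyadicCube_eq_of_le hx hy h]
  exact mem_dyadicCube _ y

lemma cubeSet_subset_or_subset {Q Q' : Cube n} {x : Fin n → ℝ} (hx : x ∈ cubeSet Q)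
    (hx' : x ∈ cubeSet Q') : cubeSet Q ⊆ cubeSet Q' ∨ cubeSet Q' ⊆ cubeSet Q :=
  (le_total Q.1 Q'.1).imp (cubeSet_subset_of_le hx hx') (cubeSet_subset_of_le hx' hx)

lemma cubeSet_nonempty (Q : Cube n) : (cubeSet Q).Nonempty :=
  ⟨fun i => 2 ^ Q.1 * Q.2 i, mem_cubeSet_iff_floor.2 fun i => by
    rw [mul_div_cancel_left₀ _ (zpow_ne_zero _ two_ne_zero), Int.floor_intCast]⟩

lemma cubeSet_eq_pi (Q : Cube n) :
    cubeSet Q = univ.pi fun i => Ico ((2:ℝ) ^ Q.1 * Q.2 i) (2 ^ Q.1 * (Q.2 i + 1)) := by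
  ext x
  simp [cubeSet]

lemma measurableSet_cubeSet (Q : Cube n) : MeasurableSet (cubeSet Q) := by
  rw [cubeSet_eq_pi]
  exact MeasurableSet.univ_pi fun _ => measurableSet_Ico

lemma vol_pos (Q : Cube n) : 0 < vol Q := pow_pos (zpow_pos two_pos Q.1) n

lemma volume_cubeSet (Q : Cube n) : volume (cubeSet Q) = ENNReal.ofReal (vol Q) := by
  have hside : ∀ i, volume (Ico ((2:ℝ) ^ Q.1 * Q.2 i) (2 ^ Q.1 * (Q.2 i + 1)))
      = ENNReal.ofReal (2 ^ Q.1) := fun i => by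
    rw [Real.volume_Ico]
    ring_nf
  rw [cubeSet_eq_pi, volume_pi_pi, Finset.prod_congr rfl fun i _ => hside i, Finset.prod_const,
    Finset.card_univ, Fintype.card_fin, ← ENNReal.ofReal_pow (zpow_pos two_pos Q.1).le, vol]

lemma fst_le_of_cubeSet_subset (hn : n ≠ 0) {Q Q' : Cube n} (h : cubeSet Q ⊆ cubeSet Q') :
    Q.1 ≤ Q'.1 := by
  have hvol := measure_mono (μ := volume) h
  rw [volume_cubeSet, volume_cubeSet, ENNReal.ofReal_le_ofReal_iff (vol_pos Q').le, vol, vol,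
    pow_le_pow_iff_left₀ (zpow_pos two_pos _).le (zpow_pos two_pos _).le hn] at hvol
  exact (zpow_le_zpow_iff_right₀ one_lt_two).1 hvol

lemma ne_zero_of_cubeSet_ssubset {Q Q' : Cube n} (h : cubeSet Q ⊂ cubeSet Q') : n ≠ 0 := by
  rintro rfl
  exact h.2 fun _ _ i => i.elim0

lemma fst_lt_of_cubeSet_ssubset {Q Q' : Cube n} (h : cubeSet Q ⊂ cubeSet Q') : Q.1 < Q'.1 := by
  refine (fst_le_of_cubeSet_subset (ne_zero_of_cubeSet_ssubset h) h.1).lt_of_ne fun heq => ?_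
  obtain ⟨x, hx⟩ := cubeSet_nonempty Q
  have hQQ' : Q = Q' := by
    rw [← dyadicCube_eq_of_mem hx, ← dyadicCube_eq_of_mem (h.1 hx), heq]
  exact h.ne (congrArg cubeSet hQQ')

lemma cubeSet_subset_or_subset_or_disjoint (Q Q' : Cube n) :
    cubeSet Q ⊆ cubeSet Q' ∨ cubeSet Q' ⊆ cubeSet Q ∨ Disjoint (cubeSet Q) (cubeSet Q') := by
  by_cases hd : Disjoint (cubeSet Q) (cubeSet Q')
  · exact Or.inr (Or.inr hd)
  · obtain ⟨x, hx, hx'⟩ := not_disjoint_iff.1 hd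
    exact (cubeSet_subset_or_subset hx hx').elim Or.inl (Or.inr ∘ Or.inl)

lemma vol_rpow (hn : n ≠ 0) (Q : Cube n) (α : ℝ) : vol Q ^ (α / n) = 2 ^ ((Q.1 : ℝ) * α) := by
  rw [vol, ← Real.rpow_intCast, ← Real.rpow_natCast, ← Real.rpow_mul zero_le_two,
    ← Real.rpow_mul zero_le_two]
  congr 1
  field_simp

end Geometry

lemma mem_Ico_congr_of_floor_eq {j : ℤ} {s t : ℝ} (h : ⌊s / 2 ^ j⌋ = ⌊t / 2 ^ j⌋) (a b : ℤ) :
    s ∈ Ico ((2:ℝ) ^ j * a) (2 ^ j * b) ↔ t ∈ Ico ((2:ℝ) ^ j * a) (2 ^ j * b) := by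
  rw [mem_Ico_two_zpow_mul_iff, mem_Ico_two_zpow_mul_iff, h]

lemma haar1_congr {k m : ℤ} {e : Bool} {s t : ℝ} (h : ⌊s / 2 ^ (k - 1)⌋ = ⌊t / 2 ^ (k - 1)⌋) :
    haar1 k m e s = haar1 k m e t := by
  have hk : (2:ℝ) ^ k = 2 ^ (k - 1) * 2 := by
    rw [← zpow_add_one₀ two_ne_zero, sub_add_cancel]
  have e₀ : (2:ℝ) ^ k * m = 2 ^ (k - 1) * ((2 * m : ℤ) : ℝ) := by push_cast; rw [hk]; ring
  have e₁ : (2:ℝ) ^ k * (m + 1 / 2) = 2 ^ (k - 1) * ((2 * m + 1 : ℤ) : ℝ) := by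
    push_cast; rw [hk]; ring
  have e₂ : (2:ℝ) ^ k * (m + 1) = 2 ^ (k - 1) * ((2 * m + 2 : ℤ) : ℝ) := by
    push_cast; rw [hk]; ring
  simp only [haar1, e₀, e₁, e₂, indicator_apply, mem_Ico_congr_of_floor_eq h]

lemma haar_congr {n : ℕ} {Q Q₂ : Cube n} (h : Q.1 < Q₂.1) (ε : Fin n → Bool)
    {y z : Fin n → ℝ} (hy : y ∈ cubeSet Q) (hz : z ∈ cubeSet Q) :
    haar Q₂ ε y = haar Q₂ ε z := by
  have hle : Q.1 ≤ Q₂.1 - 1 := by omega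
  refine Finset.prod_congr rfl fun i _ => haar1_congr ?_
  rw [floor_div_two_zpow_of_le hle, floor_div_two_zpow_of_le hle, mem_cubeSet_iff_floor.1 hy,
    mem_cubeSet_iff_floor.1 hz]

lemma haar1_eq_zero {k m : ℤ} (e : Bool) {t : ℝ} (ht : t ∉ Ico ((2:ℝ) ^ k * m) (2 ^ k * (m + 1))) :
    haar1 k m e t = 0 := by
  have hlow : t ∉ Ico ((2:ℝ) ^ k * m) (2 ^ k * (m + 1 / 2)) := fun h' =>
    ht (Ico_subset_Ico_right (by gcongr; norm_num) h')
  have hhigh : t ∉ Ico ((2:ℝ) ^ k * (m + 1 / 2)) (2 ^ k * (m + 1)) := fun h' =>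
    ht (Ico_subset_Ico_left (by gcongr; norm_num) h')
  unfold haar1
  cases e
  · rw [if_neg Bool.false_ne_true, indicator_of_notMem hlow, indicator_of_notMem hhigh, sub_zero,
      mul_zero]
  · rw [if_pos rfl, indicator_of_notMem ht, mul_zero]

lemma haar_eq_zero_of_notMem {n : ℕ} {Q : Cube n} (ε : Fin n → Bool) {x : Fin n → ℝ}
    (hx : x ∉ cubeSet Q) : haar Q ε x = 0 := by
  rw [cubeSet_eq_pi, mem_univ_pi, not_forall] at hx
  obtain ⟨i, hi⟩ := hx
  exact Finset.prod_eq_zero (Finset.mem_univ i) (haar1_eq_zero (ε i) hi)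

lemma integral_haar1_false (k m : ℤ) : ∫ t, haar1 k m false t = 0 := by
  have hint : ∀ a b : ℝ, Integrable ((Ico a b).indicator fun _ => (1:ℝ)) := fun a b =>
    (integrable_indicator_iff measurableSet_Ico).2 (integrableOn_const measure_Ico_lt_top.ne)
  simp only [haar1, Bool.false_eq_true, if_false]
  rw [integral_const_mul, integral_sub (hint _ _) (hint _ _),
    integral_indicator_const _ measurableSet_Ico, integral_indicator_const _ measurableSet_Ico,
    Real.volume_real_Ico_of_le (by gcongr; norm_num),
    Real.volume_real_Ico_of_le (by gcongr; norm_num)]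
  ring

lemma integral_haar_of_ne_allOne {n : ℕ} (Q : Cube n) {ε : Fin n → Bool} (hε : ε ≠ allOne n) :
    ∫ x, haar Q ε x = 0 := by
  obtain ⟨i, hi⟩ : ∃ i, ε i = false := by
    by_contra! h
    exact hε (funext fun i => by simpa [allOne] using h i)
  unfold haar
  rw [volume_pi, integral_fintype_prod_eq_prod (fun i => haar1 Q.1 (Q.2 i) (ε i))]
  exact Finset.prod_eq_zero (Finset.mem_univ i) (by rw [hi, integral_haar1_false])

section Averages

variable {n : ℕ}

lemma avg_indicator_cubeSet (Q₁ Q : Cube n) :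
    avg ((cubeSet Q₁).indicator fun _ => (1:ℝ)) Q
      = (volume (cubeSet Q ∩ cubeSet Q₁)).toReal / vol Q := by
  rw [avg, setIntegral_indicator (measurableSet_cubeSet Q₁), setIntegral_const, smul_eq_mul,
    mul_one, measureReal_def]

lemma avg_indicator_cubeSet_of_subset {Q₁ Q : Cube n} (h : cubeSet Q ⊆ cubeSet Q₁) :
    avg ((cubeSet Q₁).indicator fun _ => (1:ℝ)) Q = 1 := by
  rw [avg_indicator_cubeSet, inter_eq_left.2 h, volume_cubeSet,
    ENNReal.toReal_ofReal (vol_pos Q).le, div_self (vol_pos Q).ne']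

lemma avg_indicator_cubeSet_of_superset {Q₁ Q : Cube n} (h : cubeSet Q₁ ⊆ cubeSet Q) :
    avg ((cubeSet Q₁).indicator fun _ => (1:ℝ)) Q = vol Q₁ / vol Q := by
  rw [avg_indicator_cubeSet, inter_eq_right.2 h, volume_cubeSet,
    ENNReal.toReal_ofReal (vol_pos Q₁).le]

lemma avg_indicator_cubeSet_of_disjoint {Q₁ Q : Cube n} (h : Disjoint (cubeSet Q) (cubeSet Q₁)) :
    avg ((cubeSet Q₁).indicator fun _ => (1:ℝ)) Q = 0 := by
  rw [avg_indicator_cubeSet, h.inter_eq, measure_empty, ENNReal.toReal_zero, zero_div]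

lemma avg_haar_of_ssubset {Q Q₂ : Cube n} (h : cubeSet Q ⊂ cubeSet Q₂) (ε : Fin n → Bool)
    {x : Fin n → ℝ} (hx : x ∈ cubeSet Q) : avg (haar Q₂ ε) Q = haar Q₂ ε x := by
  rw [avg, setIntegral_congr_fun (measurableSet_cubeSet Q)
      fun y hy => haar_congr (fst_lt_of_cubeSet_ssubset h) ε hy hx,
    setIntegral_const, smul_eq_mul, measureReal_def, volume_cubeSet,
    ENNReal.toReal_ofReal (vol_pos Q).le, mul_div_cancel_left₀ _ (vol_pos Q).ne']

lemma avg_haar_of_superset {Q Q₂ : Cube n} (h : cubeSet Q₂ ⊆ cubeSet Q) {ε : Fin n → Bool}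
    (hε : ε ≠ allOne n) : avg (haar Q₂ ε) Q = 0 := by
  rw [avg, setIntegral_eq_integral_of_forall_compl_eq_zero
      fun y hy => haar_eq_zero_of_notMem ε fun hy₂ => hy (h hy₂),
    integral_haar_of_ne_allOne Q₂ hε, zero_div]

end Averages

lemma hasSum_geometric_calpha {α : ℝ} (hα : 0 < α) :
    HasSum (fun j : ℕ => ((2:ℝ) ^ (-α)) ^ j) (1 + calpha α) := by
  have hr : (2:ℝ) ^ (-α) < 1 := Real.rpow_lt_one_of_one_lt_of_neg one_lt_two (neg_neg_of_pos hα)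
  have hgeom := summable_geometric_of_lt_one (Real.rpow_nonneg zero_le_two _) hr
  have hterm : ∀ j : ℕ, ((2:ℝ) ^ (-α)) ^ (j + 1) = 2 ^ (-((j : ℝ) + 1) * α) := fun j => by
    rw [← Real.rpow_natCast, ← Real.rpow_mul zero_le_two]
    push_cast
    ring_nf
  have htail : HasSum (fun j : ℕ => ((2:ℝ) ^ (-α)) ^ (j + 1)) (calpha α) := by
    rw [calpha, ← tsum_congr hterm]
    exact ((summable_nat_add_iff 1).2 hgeom).hasSum
  simpa only [pow_zero] using htail.zero_add

lemma hasSum_vol_rpow_indicator_of_subset {n : ℕ} (hn : n ≠ 0) {α : ℝ} (hα : 0 < α)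
    (Q₁ : Cube n) (x : Fin n → ℝ) :
    HasSum (fun Q : Cube n => if cubeSet Q ⊆ cubeSet Q₁ then
        vol Q ^ (α / n) * (cubeSet Q).indicator (fun _ => (1:ℝ)) x else 0)
      ((1 + calpha α) * vol Q₁ ^ (α / n) * (cubeSet Q₁).indicator (fun _ => (1:ℝ)) x) := by
  by_cases hx : x ∈ cubeSet Q₁
  swap
  · have hzero : ∀ Q : Cube n, cubeSet Q ⊆ cubeSet Q₁ →
        vol Q ^ (α / n) * (cubeSet Q).indicator (fun _ => (1:ℝ)) x = 0 := fun Q hQ => by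
      rw [indicator_of_notMem fun hxQ => hx (hQ hxQ), mul_zero]
    simp [indicator_of_notMem hx, ite_eq_right_iff.2 (hzero _), hasSum_zero]
  -- the cubes inside `Q₁` containing `x` are the dyadic cubes of `x` of generation `Q₁.1 - j`
  set c : ℕ → Cube n := fun j => dyadicCube (Q₁.1 - j) x
  have hc : Function.Injective c := fun i j hij => by
    have := congrArg Prod.fst hij
    simp only [c, dyadicCube] at this
    omega
  have hc_mem : ∀ j, x ∈ cubeSet (c j) := fun j => mem_dyadicCube _ x
  have hc_subset : ∀ j, cubeSet (c j) ⊆ cubeSet Q₁ := fun j =>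
    cubeSet_subset_of_le (hc_mem j) hx (by simp [c, dyadicCube])
  have hsupp : ∀ Q ∉ range c, (if cubeSet Q ⊆ cubeSet Q₁ then
      vol Q ^ (α / n) * (cubeSet Q).indicator (fun _ => (1:ℝ)) x else 0) = 0 := by
    intro Q hQ
    refine ite_eq_right_iff.2 fun hQ₁ => ?_
    rw [indicator_of_notMem, mul_zero]
    intro hxQ
    refine hQ ⟨(Q₁.1 - Q.1).toNat, ?_⟩
    have hle := fst_le_of_cubeSet_subset hn hQ₁
    simp only [c, Int.toNat_of_nonneg (sub_nonneg.2 hle), sub_sub_cancel]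
    exact dyadicCube_eq_of_mem hxQ
  have hval : ∀ j : ℕ, vol (c j) ^ (α / n) = vol Q₁ ^ (α / n) * ((2:ℝ) ^ (-α)) ^ j := fun j => by
    rw [vol_rpow hn, vol_rpow hn, ← Real.rpow_natCast, ← Real.rpow_mul zero_le_two,
      ← Real.rpow_add two_pos]
    simp only [c, dyadicCube]
    push_cast
    ring_nf
  rw [← hc.hasSum_iff hsupp, indicator_of_mem hx, mul_one, mul_comm (1 + calpha α)]
  refine ((hasSum_geometric_calpha hα).mul_left (vol Q₁ ^ (α / n))).congr_fun fun j => ?_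
  rw [Function.comp_apply, if_pos (hc_subset j), indicator_of_mem (hc_mem j), mul_one, hval]

lemma IalphaBil_summand_eq {n : ℕ} (α : ℝ) {Q₁ Q₂ : Cube n} (hQ : cubeSet Q₁ ⊂ cubeSet Q₂)
    {ε : Fin n → Bool} (hε : ε ≠ allOne n) (x : Fin n → ℝ) (Q : Cube n) :
    vol Q ^ (α / n) * avg ((cubeSet Q₁).indicator fun _ => (1:ℝ)) Q * avg (haar Q₂ ε) Q *
        (cubeSet Q).indicator (fun _ => (1:ℝ)) x
      = (if cubeSet Q ⊆ cubeSet Q₁ then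
            vol Q ^ (α / n) * (cubeSet Q).indicator (fun _ => (1:ℝ)) x else 0) * haar Q₂ ε x
        + vol Q₁ * (if cubeSet Q₁ ⊂ cubeSet Q ∧ cubeSet Q ⊂ cubeSet Q₂ then
            vol Q ^ (α / n) * haar Q₂ ε x * (cubeSet Q).indicator (fun _ => (1:ℝ)) x / vol Q
          else 0) := by
  by_cases hxQ : x ∈ cubeSet Q
  swap
  · simp [indicator_of_notMem hxQ]
  rw [indicator_of_mem hxQ]
  by_cases hsub : cubeSet Q ⊆ cubeSet Q₁
  · rw [avg_indicator_cubeSet_of_subset hsub, avg_haar_of_ssubset (hsub.trans_ssubset hQ) ε hxQ,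
      if_pos hsub, if_neg fun h => h.1.2 hsub]
    ring
  rw [if_neg hsub]
  rcases cubeSet_subset_or_subset_or_disjoint Q Q₁ with h | hsup | hdisj
  · exact absurd h hsub
  · rw [avg_indicator_cubeSet_of_superset hsup]
    by_cases hQ₂Q : cubeSet Q₂ ⊆ cubeSet Q
    · rw [avg_haar_of_superset hQ₂Q hε, if_neg fun h => h.2.2 hQ₂Q]
      ring
    obtain ⟨y, hy⟩ := cubeSet_nonempty Q₁
    have hQQ₂ : cubeSet Q ⊂ cubeSet Q₂ :=
      ((cubeSet_subset_or_subset (hsup hy) (hQ.1 hy)).resolve_right hQ₂Q).ssubset_of_not_subset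
        hQ₂Q
    rw [avg_haar_of_ssubset hQQ₂ ε hxQ, if_pos ⟨hsup.ssubset_of_not_subset hsub, hQQ₂⟩]
    ring
  · have hnot : ¬ cubeSet Q₁ ⊆ cubeSet Q := fun h =>
      (cubeSet_nonempty Q₁).ne_empty (hdisj.symm.eq_bot_of_le h)
    rw [avg_indicator_cubeSet_of_disjoint hdisj, if_neg fun h => hnot h.1.1]
    ring

lemma finite_setOf_mem_ssubset_ssubset {n : ℕ} (x : Fin n → ℝ) (Q₁ Q₂ : Cube n) :
    {Q : Cube n | x ∈ cubeSet Q ∧ cubeSet Q₁ ⊂ cubeSet Q ∧ cubeSet Q ⊂ cubeSet Q₂}.Finite := by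
  refine ((finite_Icc Q₁.1 Q₂.1).image fun k => dyadicCube k x).subset ?_
  rintro Q ⟨hxQ, h₁, h₂⟩
  exact ⟨Q.1, ⟨(fst_lt_of_cubeSet_ssubset h₁).le, (fst_lt_of_cubeSet_ssubset h₂).le⟩,
    dyadicCube_eq_of_mem hxQ⟩

theorem statement6_general {n : ℕ} (α : ℝ) (hα : 0 < α)
    (Q₁ Q₂ : Cube n) (hQ : cubeSet Q₁ ⊂ cubeSet Q₂)
    (ε₂ : Fin n → Bool) (hε₂ : ε₂ ≠ allOne n) (x : Fin n → ℝ) :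
    IalphaBil α ((cubeSet Q₁).indicator (fun _ => (1:ℝ))) (haar Q₂ ε₂) x
      = (1 + calpha α) * vol Q₁ ^ (α / n) * haar Q₂ ε₂ x *
          (cubeSet Q₁).indicator (fun _ => (1:ℝ)) x
        + vol Q₁ * ∑' Q : Cube n,
            (if cubeSet Q₁ ⊂ cubeSet Q ∧ cubeSet Q ⊂ cubeSet Q₂ then
              vol Q ^ (α / n) * haar Q₂ ε₂ x * (cubeSet Q).indicator (fun _ => (1:ℝ)) x / vol Q
            else 0) := by
  have hsub := (hasSum_vol_rpow_indicator_of_subset (ne_zero_of_cubeSet_ssubset hQ) hα Q₁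
    x).mul_right (haar Q₂ ε₂ x)
  have hbetween : Summable fun Q : Cube n => vol Q₁ *
      (if cubeSet Q₁ ⊂ cubeSet Q ∧ cubeSet Q ⊂ cubeSet Q₂ then
        vol Q ^ (α / n) * haar Q₂ ε₂ x * (cubeSet Q).indicator (fun _ => (1:ℝ)) x / vol Q
      else 0) := by
    refine summable_of_hasFiniteSupport ((finite_setOf_mem_ssubset_ssubset x Q₁ Q₂).subset ?_)
    intro Q hQ'
    by_cases hc : cubeSet Q₁ ⊂ cubeSet Q ∧ cubeSet Q ⊂ cubeSet Q₂
    · by_contra hxQ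
      simp [hc, indicator_of_notMem fun h => hxQ ⟨h, hc⟩] at hQ'
    · simp [hc] at hQ'
  rw [IalphaBil, tsum_congr (IalphaBil_summand_eq α hQ hε₂ x), hsub.summable.tsum_add hbetween,
    hsub.tsum_eq, tsum_mul_left]
  ring

/-- for dyadic cubes `Q₁ ⊊ Q₂` and a cancellative Haar function `h_{Q₂}^{ε₂}`,
`I_α^D(1_{Q₁}, h_{Q₂}^{ε₂}) = (1+c_α)|Q₁|^{α/n} h_{Q₂}^{ε₂} 1_{Q₁}
  + |Q₁| Σ_{Q₁ ⊊ Q ⊊ Q₂} |Q|^{α/n} h_{Q₂}^{ε₂} 1_Q/|Q|`. -/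
theorem statement6 {n : ℕ} (α : ℝ) (hα : 0 < α) (hαn : α < 2*n)
    (Q₁ Q₂ : Cube n) (hQ : cubeSet Q₁ ⊂ cubeSet Q₂)
    (ε₂ : Fin n → Bool) (hε₂ : ε₂ ≠ allOne n) (x : Fin n → ℝ) :
    IalphaBil α ((cubeSet Q₁).indicator (fun _ => (1:ℝ))) (haar Q₂ ε₂) x
      = (1 + calpha α) * vol Q₁ ^ (α / n) * haar Q₂ ε₂ x *
          (cubeSet Q₁).indicator (fun _ => (1:ℝ)) x
        + vol Q₁ * ∑' Q : Cube n,
            (if cubeSet Q₁ ⊂ cubeSet Q ∧ cubeSet Q ⊂ cubeSet Q₂ then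
              vol Q ^ (α / n) * haar Q₂ ε₂ x * (cubeSet Q).indicator (fun _ => (1:ℝ)) x / vol Q
            else 0) :=
  statement6_general α hα Q₁ Q₂ hQ ε₂ hε₂ x
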